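/- For any matrix X of rank r with reduced SVD X = U S Vᵀ and any matrix W satisfying UᵀW = 0, W V = 0, and ‖W‖ ≤ 1 (operator norm), the matrix U Vᵀ + W is a subgradient of the nuclear norm at X. -/

import Mathlib

noncomputable section
open Matrix BigOperators

/-- Frobenius (trace) inner product of two real matrices. -/
def frobInner {m n : ℕ} (A B : Matrix (Fin m) (Fin n) ℝ) : ℝ := (Aᵀ * B).trace

/-- Singular values of a real matrix: square roots of the eigenvalues of `Xᴴ * X`. -/
def singularValues {m n : ℕ} (X : Matrix (Fin m) (Fin n) ℝ) : Fin n → ℝ :=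
  fun i => Real.sqrt ((Matrix.isHermitian_conjTranspose_mul_self X).eigenvalues i)

/-- Nuclear norm: sum of singular values. -/
def nuclearNorm {m n : ℕ} (X : Matrix (Fin m) (Fin n) ℝ) : ℝ := ∑ i, singularValues X i

/-- Operator norm: largest singular value. -/
def opNorm {m n : ℕ} (X : Matrix (Fin m) (Fin n) ℝ) : ℝ := ⨆ i, singularValues X i

/-!
Put `G = U Vᵀ + W`. Because `Uᵀ W = 0`, `Gᵀ G = V Vᵀ + Wᵀ W`, and because `W V = 0`, `W` only
sees the component of a vector orthogonal to the range of `V`; together with `‖W‖ ≤ 1` this makes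
`G` a contraction. Expanding `⟨G, Z⟩ = tr (Gᵀ Z)` in an orthonormal eigenbasis `(vᵢ)` of `Zᵀ Z`
and applying Cauchy–Schwarz to each `(G vᵢ) · (Z vᵢ)` gives `⟨G, Z⟩ ≤ ‖G‖ ‖Z‖_* ≤ ‖Z‖_*`.
On the other hand `Gᵀ X = V S Vᵀ`, whose trace is `∑ Sᵢᵢ`. Since `V S Vᵀ` is the positive square
root of `Xᵀ X`, it acts on the eigenbasis of `Xᵀ X` by the singular values of `X`, so the same
trace is also `‖X‖_*`. Hence `⟨G, Z - X⟩ ≤ ‖Z‖_* - ‖X‖_*`.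
-/

section DotProduct

variable {ι κ : Type*} [Fintype ι] [Fintype κ]

theorem dotProduct_le_sqrt_mul_sqrt (x y : ι → ℝ) : x ⬝ᵥ y ≤ √(x ⬝ᵥ x) * √(y ⬝ᵥ y) := by
  simpa [dotProduct, sq] using Real.sum_mul_le_sqrt_mul_sqrt Finset.univ x y

theorem mulVec_dotProduct_mulVec {R μ : Type*} [CommSemiring R] [Fintype μ]
    (A : Matrix μ ι R) (B : Matrix μ κ R) (x : ι → R) (y : κ → R) :
    (A *ᵥ x) ⬝ᵥ (B *ᵥ y) = x ⬝ᵥ ((Aᵀ * B) *ᵥ y) := by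
  rw [← mulVec_mulVec, dotProduct_transpose_mulVec, dotProduct_comm]

theorem dotProduct_self_sub_mulVec_transpose_mulVec [DecidableEq κ] {V : Matrix ι κ ℝ}
    (hV : Vᵀ * V = 1) (v : ι → ℝ) :
    (v - V *ᵥ (Vᵀ *ᵥ v)) ⬝ᵥ (v - V *ᵥ (Vᵀ *ᵥ v)) = v ⬝ᵥ v - (Vᵀ *ᵥ v) ⬝ᵥ (Vᵀ *ᵥ v) := by
  have hcross : v ⬝ᵥ (V *ᵥ (Vᵀ *ᵥ v)) = (Vᵀ *ᵥ v) ⬝ᵥ (Vᵀ *ᵥ v) := by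
    rw [dotProduct_mulVec, ← mulVec_transpose]
  have hsq : (V *ᵥ (Vᵀ *ᵥ v)) ⬝ᵥ (V *ᵥ (Vᵀ *ᵥ v)) = (Vᵀ *ᵥ v) ⬝ᵥ (Vᵀ *ᵥ v) := by
    rw [mulVec_dotProduct_mulVec, hV, one_mulVec]
  simp only [sub_dotProduct, dotProduct_sub, hsq, dotProduct_comm _ v, hcross]
  ring

end DotProduct

section OrthonormalBasis

variable {ι : Type*} [Fintype ι] (b : OrthonormalBasis ι ℝ (EuclideanSpace ℝ ι))

theorem OrthonormalBasis.sum_dotProduct_mul_dotProduct (x y : ι → ℝ) :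
    ∑ i, (⇑(b i) ⬝ᵥ x) * (⇑(b i) ⬝ᵥ y) = x ⬝ᵥ y := by
  simpa [EuclideanSpace.inner_eq_star_dotProduct, dotProduct_comm] using
    b.sum_inner_mul_inner (WithLp.toLp 2 x) (WithLp.toLp 2 y)

theorem OrthonormalBasis.dotProduct_self (i : ι) : ⇑(b i) ⬝ᵥ ⇑(b i) = 1 := by
  have := b.inner_eq_one i
  rwa [EuclideanSpace.inner_eq_star_dotProduct, star_trivial] at this

theorem OrthonormalBasis.trace_eq_sum_dotProduct_mulVec [DecidableEq ι] (M : Matrix ι ι ℝ) :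
    M.trace = ∑ i, ⇑(b i) ⬝ᵥ (M *ᵥ ⇑(b i)) := by
  calc M.trace = LinearMap.trace ℝ _ (toEuclideanLin M) := by
        rw [toEuclideanLin_eq_toLin_orthonormal,
          LinearMap.trace_eq_matrix_trace ℝ (EuclideanSpace.basisFun ι ℝ).toBasis,
          LinearMap.toMatrix_toLin]
    _ = ∑ i, ⇑(b i) ⬝ᵥ (M *ᵥ ⇑(b i)) := by
        rw [LinearMap.trace_eq_sum_inner _ b]
        simp [EuclideanSpace.inner_eq_star_dotProduct, dotProduct_comm]

end OrthonormalBasis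

theorem Matrix.IsHermitian.dotProduct_mulVec_le {ι : Type*} [Fintype ι] [DecidableEq ι]
    {A : Matrix ι ι ℝ} (hA : A.IsHermitian) {c : ℝ} (hc : ∀ i, hA.eigenvalues i ≤ c)
    (x : ι → ℝ) : x ⬝ᵥ (A *ᵥ x) ≤ c * (x ⬝ᵥ x) := by
  set b := hA.eigenvectorBasis
  have hcoord (i : ι) : ⇑(b i) ⬝ᵥ (A *ᵥ x) = hA.eigenvalues i * (⇑(b i) ⬝ᵥ x) := by
    rw [dotProduct_mulVec, ← mulVec_transpose, ← conjTranspose_eq_transpose_of_trivial, hA,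
      hA.mulVec_eigenvectorBasis, smul_dotProduct, smul_eq_mul]
  calc x ⬝ᵥ (A *ᵥ x) = ∑ i, hA.eigenvalues i * (⇑(b i) ⬝ᵥ x) ^ 2 := by
        rw [← b.sum_dotProduct_mul_dotProduct]
        exact Finset.sum_congr rfl fun i _ => by rw [hcoord]; ring
    _ ≤ ∑ i, c * (⇑(b i) ⬝ᵥ x) ^ 2 :=
        Finset.sum_le_sum fun i _ => mul_le_mul_of_nonneg_right (hc i) (sq_nonneg _)
    _ = c * (x ⬝ᵥ x) := by
        simp only [← Finset.mul_sum, sq, b.sum_dotProduct_mul_dotProduct]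

section SingularValues

variable {m n : ℕ}

theorem singularValues_nonneg (X : Matrix (Fin m) (Fin n) ℝ) (i : Fin n) :
    0 ≤ singularValues X i :=
  Real.sqrt_nonneg _

theorem sq_singularValues (X : Matrix (Fin m) (Fin n) ℝ) (i : Fin n) :
    singularValues X i ^ 2 = (isHermitian_conjTranspose_mul_self X).eigenvalues i :=
  Real.sq_sqrt (eigenvalues_conjTranspose_mul_self_nonneg X i)

theorem singularValues_le_opNorm (X : Matrix (Fin m) (Fin n) ℝ) (i : Fin n) :
    singularValues X i ≤ opNorm X :=
  le_ciSup (Set.finite_range _).bddAbove i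

theorem opNorm_nonneg (X : Matrix (Fin m) (Fin n) ℝ) : 0 ≤ opNorm X :=
  Real.iSup_nonneg (singularValues_nonneg X)

theorem nuclearNorm_nonneg (X : Matrix (Fin m) (Fin n) ℝ) : 0 ≤ nuclearNorm X :=
  Finset.sum_nonneg fun i _ => singularValues_nonneg X i

theorem frobInner_sub_right (A B C : Matrix (Fin m) (Fin n) ℝ) :
    frobInner A (B - C) = frobInner A B - frobInner A C := by
  simp only [frobInner, Matrix.mul_sub, trace_sub]

def rightSingularBasis (X : Matrix (Fin m) (Fin n) ℝ) :
    OrthonormalBasis (Fin n) ℝ (EuclideanSpace ℝ (Fin n)) :=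
  (isHermitian_conjTranspose_mul_self X).eigenvectorBasis

theorem transpose_mul_self_mulVec_rightSingularBasis (X : Matrix (Fin m) (Fin n) ℝ) (i : Fin n) :
    (Xᵀ * X) *ᵥ ⇑(rightSingularBasis X i) =
      singularValues X i ^ 2 • ⇑(rightSingularBasis X i) := by
  rw [← conjTranspose_eq_transpose_of_trivial, rightSingularBasis,
    IsHermitian.mulVec_eigenvectorBasis, sq_singularValues]

theorem mulVec_rightSingularBasis_dotProduct_self (X : Matrix (Fin m) (Fin n) ℝ) (i : Fin n) :
    (X *ᵥ ⇑(rightSingularBasis X i)) ⬝ᵥ (X *ᵥ ⇑(rightSingularBasis X i)) =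
      singularValues X i ^ 2 := by
  rw [mulVec_dotProduct_mulVec, transpose_mul_self_mulVec_rightSingularBasis, dotProduct_smul,
    smul_eq_mul, OrthonormalBasis.dotProduct_self, mul_one]

theorem mulVec_dotProduct_self_le_opNorm_sq (X : Matrix (Fin m) (Fin n) ℝ) (v : Fin n → ℝ) :
    (X *ᵥ v) ⬝ᵥ (X *ᵥ v) ≤ opNorm X ^ 2 * (v ⬝ᵥ v) := by
  rw [mulVec_dotProduct_mulVec, ← conjTranspose_eq_transpose_of_trivial]
  refine (isHermitian_conjTranspose_mul_self X).dotProduct_mulVec_le (fun i => ?_) v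
  rw [← sq_singularValues]
  exact pow_le_pow_left₀ (singularValues_nonneg X i) (singularValues_le_opNorm X i) 2

theorem opNorm_le_of_mulVec_dotProduct_self_le (X : Matrix (Fin m) (Fin n) ℝ) {c : ℝ}
    (hc : 0 ≤ c) (hX : ∀ v, (X *ᵥ v) ⬝ᵥ (X *ᵥ v) ≤ c ^ 2 * (v ⬝ᵥ v)) : opNorm X ≤ c := by
  refine Real.iSup_le (fun i => ?_) hc
  rw [← pow_le_pow_iff_left₀ (singularValues_nonneg X i) hc two_ne_zero,
    ← mulVec_rightSingularBasis_dotProduct_self]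
  simpa [OrthonormalBasis.dotProduct_self] using hX ⇑(rightSingularBasis X i)

theorem frobInner_eq_sum_mulVec_dotProduct (A B : Matrix (Fin m) (Fin n) ℝ)
    (b : OrthonormalBasis (Fin n) ℝ (EuclideanSpace ℝ (Fin n))) :
    frobInner A B = ∑ i, (A *ᵥ ⇑(b i)) ⬝ᵥ (B *ᵥ ⇑(b i)) := by
  simp only [frobInner, b.trace_eq_sum_dotProduct_mulVec, mulVec_dotProduct_mulVec]

theorem frobInner_le_opNorm_mul_nuclearNorm (A B : Matrix (Fin m) (Fin n) ℝ) :
    frobInner A B ≤ opNorm A * nuclearNorm B := by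
  rw [frobInner_eq_sum_mulVec_dotProduct A B (rightSingularBasis B), nuclearNorm,
    Finset.mul_sum]
  refine Finset.sum_le_sum fun i _ => ?_
  set v := ⇑(rightSingularBasis B i)
  have hA : √((A *ᵥ v) ⬝ᵥ (A *ᵥ v)) ≤ opNorm A := by
    refine Real.sqrt_le_iff.mpr ⟨opNorm_nonneg A, ?_⟩
    simpa [v, OrthonormalBasis.dotProduct_self] using mulVec_dotProduct_self_le_opNorm_sq A v
  have hB : √((B *ᵥ v) ⬝ᵥ (B *ᵥ v)) = singularValues B i := by
    rw [mulVec_rightSingularBasis_dotProduct_self, Real.sqrt_sq (singularValues_nonneg B i)]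
  calc (A *ᵥ v) ⬝ᵥ (B *ᵥ v) ≤ √((A *ᵥ v) ⬝ᵥ (A *ᵥ v)) * √((B *ᵥ v) ⬝ᵥ (B *ᵥ v)) :=
        dotProduct_le_sqrt_mul_sqrt _ _
    _ ≤ opNorm A * singularValues B i := by
        rw [hB]; exact mul_le_mul_of_nonneg_right hA (singularValues_nonneg B i)

end SingularValues

section OrthonormalColumns

variable {R ι κ μ : Type*} [CommSemiring R] [Fintype κ] [Fintype μ] [DecidableEq κ]

theorem trace_mul_diagonal_mul_transpose [Fintype ι] {V : Matrix ι κ R} (hV : Vᵀ * V = 1)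
    (s : κ → R) :
    (V * diagonal s * Vᵀ).trace = ∑ i, s i := by
  rw [trace_mul_comm, ← Matrix.mul_assoc, hV, Matrix.one_mul, trace_diagonal]

theorem mul_self_mul_diagonal_mul_transpose [Fintype ι] {V : Matrix ι κ R} (hV : Vᵀ * V = 1)
    (s : κ → R) :
    V * diagonal s * Vᵀ * (V * diagonal s * Vᵀ) = V * diagonal (s * s) * Vᵀ := by
  rw [show diagonal (s * s) = diagonal s * diagonal s from (diagonal_mul_diagonal s s).symm]
  simp only [Matrix.mul_assoc]
  rw [← Matrix.mul_assoc Vᵀ V, hV, Matrix.one_mul]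

theorem transpose_mul_self_mul_transpose_add {U : Matrix μ κ R} {V : Matrix ι κ R}
    {W : Matrix μ ι R} (hU : Uᵀ * U = 1) (hWU : Uᵀ * W = 0) :
    (U * Vᵀ + W)ᵀ * (U * Vᵀ + W) = V * Vᵀ + Wᵀ * W := by
  have hUW : Wᵀ * U = 0 := by simpa using congrArg transpose hWU
  simp only [transpose_add, transpose_mul, transpose_transpose, Matrix.add_mul, Matrix.mul_add,
    Matrix.mul_assoc]
  rw [← Matrix.mul_assoc Uᵀ U, hU, ← Matrix.mul_assoc Wᵀ U, hUW, hWU]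
  simp only [Matrix.one_mul, Matrix.zero_mul, Matrix.mul_zero, add_zero, zero_add]

theorem mulVec_eq_sqrt_smul_of_mul_self_mulVec_eq_smul [Fintype ι] {V : Matrix ι κ ℝ}
    (hV : Vᵀ * V = 1) {s : κ → ℝ} (hs : 0 ≤ s) {v : ι → ℝ} {c : ℝ}
    (hv : (V * diagonal s * Vᵀ * (V * diagonal s * Vᵀ)) *ᵥ v = c • v) :
    (V * diagonal s * Vᵀ) *ᵥ v = √c • v := by
  set w := Vᵀ *ᵥ v
  rw [mul_self_mul_diagonal_mul_transpose hV, ← mulVec_mulVec, ← mulVec_mulVec] at hv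
  have hsq : diagonal (s * s) *ᵥ w = c • w := by
    have := congrArg (Vᵀ *ᵥ ·) hv
    rwa [mulVec_mulVec, hV, one_mulVec, mulVec_smul] at this
  have hsqrt : diagonal s *ᵥ w = √c • w := by
    funext j
    have hj : s j * s j * w j = c * w j := by simpa [mulVec_diagonal] using congrFun hsq j
    rcases eq_or_ne (w j) 0 with hw | hw
    · simp [mulVec_diagonal, hw]
    · have hc : s j * s j = c := mul_right_cancel₀ hw hj
      simp [mulVec_diagonal, ← hc, Real.sqrt_mul_self (hs j)]
  rw [← mulVec_mulVec, ← mulVec_mulVec, hsqrt, mulVec_smul]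
  rcases eq_or_ne c 0 with rfl | hc
  · simp
  · rw [hsq, mulVec_smul] at hv
    rw [smul_right_injective _ hc hv]

end OrthonormalColumns

section ReducedSVD

variable {m n r : ℕ} {U : Matrix (Fin m) (Fin r) ℝ} {V : Matrix (Fin n) (Fin r) ℝ}

theorem nuclearNorm_mul_diagonal_mul_transpose (hU : Uᵀ * U = 1) (hV : Vᵀ * V = 1)
    {s : Fin r → ℝ} (hs : 0 ≤ s) : nuclearNorm (U * diagonal s * Vᵀ) = ∑ i, s i := by
  set X := U * diagonal s * Vᵀ
  set b := rightSingularBasis X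
  have hXX : Xᵀ * X = V * diagonal s * Vᵀ * (V * diagonal s * Vᵀ) := by
    simp only [X, transpose_mul, transpose_transpose, diagonal_transpose, Matrix.mul_assoc]
    rw [← Matrix.mul_assoc Uᵀ U, hU, Matrix.one_mul, ← Matrix.mul_assoc Vᵀ V, hV,
      Matrix.one_mul]
  have hroot (i : Fin n) : (V * diagonal s * Vᵀ) *ᵥ ⇑(b i) = singularValues X i • ⇑(b i) := by
    rw [mulVec_eq_sqrt_smul_of_mul_self_mulVec_eq_smul hV hs
        (hXX ▸ transpose_mul_self_mulVec_rightSingularBasis X i),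
      Real.sqrt_sq (singularValues_nonneg X i)]
  rw [← trace_mul_diagonal_mul_transpose hV, b.trace_eq_sum_dotProduct_mulVec, nuclearNorm]
  simp only [hroot, dotProduct_smul, b.dotProduct_self, smul_eq_mul, mul_one]

theorem frobInner_mul_transpose_add_mul_diagonal_mul_transpose {W : Matrix (Fin m) (Fin n) ℝ}
    (hU : Uᵀ * U = 1) (hV : Vᵀ * V = 1) (hWU : Uᵀ * W = 0) (s : Fin r → ℝ) :
    frobInner (U * Vᵀ + W) (U * diagonal s * Vᵀ) = ∑ i, s i := by
  have hUW : Wᵀ * U = 0 := by simpa using congrArg transpose hWU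
  rw [frobInner, ← trace_mul_diagonal_mul_transpose hV s]
  congr 1
  simp only [transpose_add, transpose_mul, transpose_transpose, Matrix.add_mul, Matrix.mul_assoc]
  rw [← Matrix.mul_assoc Uᵀ U, hU, ← Matrix.mul_assoc Wᵀ U, hUW]
  simp only [Matrix.one_mul, Matrix.zero_mul, add_zero]

theorem opNorm_mul_transpose_add_le_one {W : Matrix (Fin m) (Fin n) ℝ} (hU : Uᵀ * U = 1)
    (hV : Vᵀ * V = 1) (hWU : Uᵀ * W = 0) (hWV : W * V = 0) (hW : opNorm W ≤ 1) :
    opNorm (U * Vᵀ + W) ≤ 1 := by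
  refine opNorm_le_of_mulVec_dotProduct_self_le _ zero_le_one fun v => ?_
  set p := v - V *ᵥ (Vᵀ *ᵥ v)
  have hWp : W *ᵥ v = W *ᵥ p := by
    rw [mulVec_sub, mulVec_mulVec, hWV, zero_mulVec, sub_zero]
  have hWcontr : (W *ᵥ p) ⬝ᵥ (W *ᵥ p) ≤ p ⬝ᵥ p := by
    have hp : 0 ≤ p ⬝ᵥ p := by simpa using dotProduct_self_star_nonneg p
    calc (W *ᵥ p) ⬝ᵥ (W *ᵥ p) ≤ opNorm W ^ 2 * (p ⬝ᵥ p) :=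
          mulVec_dotProduct_self_le_opNorm_sq W p
      _ ≤ p ⬝ᵥ p := mul_le_of_le_one_left hp (pow_le_one₀ (opNorm_nonneg W) hW)
  have hsplit : ((U * Vᵀ + W) *ᵥ v) ⬝ᵥ ((U * Vᵀ + W) *ᵥ v) =
      (Vᵀ *ᵥ v) ⬝ᵥ (Vᵀ *ᵥ v) + (W *ᵥ v) ⬝ᵥ (W *ᵥ v) := by
    simp only [mulVec_dotProduct_mulVec, transpose_transpose]
    rw [transpose_mul_self_mul_transpose_add hU hWU, add_mulVec, dotProduct_add]
  have hpyth := dotProduct_self_sub_mulVec_transpose_mulVec hV v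
  rw [hsplit, hWp]
  linarith

end ReducedSVD

theorem uv_add_w_mem_subdifferential_nuclearNorm_general
    {m n r : ℕ} (X : Matrix (Fin m) (Fin n) ℝ)
    (U : Matrix (Fin m) (Fin r) ℝ) (S : Matrix (Fin r) (Fin r) ℝ)
    (V : Matrix (Fin n) (Fin r) ℝ) (W : Matrix (Fin m) (Fin n) ℝ)
    (hU : Uᵀ * U = 1) (hV : Vᵀ * V = 1)
    (hSdiag : ∀ i j : Fin r, i ≠ j → S i j = 0)
    (hSpos : ∀ i : Fin r, 0 < S i i)
    (hX : X = U * S * Vᵀ)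
    (hWU : Uᵀ * W = 0) (hWV : W * V = 0) (hWnorm : opNorm W ≤ 1) :
    ∀ Z : Matrix (Fin m) (Fin n) ℝ,
      nuclearNorm Z ≥ nuclearNorm X + frobInner (U * Vᵀ + W) (Z - X) := by
  have hS : S = diagonal (diag S) := (IsDiag.diagonal_diag fun i j => hSdiag i j).symm
  have hGX : frobInner (U * Vᵀ + W) X = nuclearNorm X := by
    rw [hX, hS, frobInner_mul_transpose_add_mul_diagonal_mul_transpose hU hV hWU,
      nuclearNorm_mul_diagonal_mul_transpose hU hV (s := diag S) fun i => (hSpos i).le]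
  intro Z
  have hGZ : frobInner (U * Vᵀ + W) Z ≤ nuclearNorm Z :=
    (frobInner_le_opNorm_mul_nuclearNorm _ Z).trans <| mul_le_of_le_one_left
      (nuclearNorm_nonneg Z) (opNorm_mul_transpose_add_le_one hU hV hWU hWV hWnorm)
  rw [frobInner_sub_right, hGX]
  linarith

/-- For any matrix `X` with reduced SVD `X = U S Vᵀ` and any matrix `W`
with `Uᵀ W = 0`, `W V = 0` and `‖W‖ ≤ 1` (operator norm), `U Vᵀ + W` is a subgradient of
the nuclear norm at `X`. -/
theorem uv_add_w_mem_subdifferential_nuclearNorm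
    {m n r : ℕ} (X : Matrix (Fin m) (Fin n) ℝ)
    (U : Matrix (Fin m) (Fin r) ℝ) (S : Matrix (Fin r) (Fin r) ℝ)
    (V : Matrix (Fin n) (Fin r) ℝ) (W : Matrix (Fin m) (Fin n) ℝ)
    (hrank : X.rank = r)
    (hU : Uᵀ * U = 1) (hV : Vᵀ * V = 1)
    (hSdiag : ∀ i j : Fin r, i ≠ j → S i j = 0)
    (hSpos : ∀ i : Fin r, 0 < S i i)
    (hX : X = U * S * Vᵀ)
    (hWU : Uᵀ * W = 0) (hWV : W * V = 0) (hWnorm : opNorm W ≤ 1) :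
    ∀ Z : Matrix (Fin m) (Fin n) ℝ,
      nuclearNorm Z ≥ nuclearNorm X + frobInner (U * Vᵀ + W) (Z - X) :=
  uv_add_w_mem_subdifferential_nuclearNorm_general X U S V W hU hV hSdiag hSpos hX hWU hWV hWnorm
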